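/- Let L ≥ 1, let δ₁,...,δ_L and \bar δ₁,...,\bar δ_L be positive reals with δ_j \bar δ_j ≤ 1/4 for all j, and define S = ∑_{r=1}^L ∏_{j<r} \bar δ_j ∏_{j>r} δ_j, \bar S = ∑_{r=1}^L ∏_{j<r} δ_j ∏_{j>r} \bar δ_j, P = ∏_{k=1}^L δ_k, \bar P = ∏_{k=1}^L \bar δ_k. Then (L·P/S)·(\bar P/\bar S) ≤ 1/(4L), i.e. 4L²·P·\bar P ≤ S·\bar S. -/

import Mathlib

/-!
Write `a r = ∏_{j<r} δbar_j ∏_{j>r} δ_j` and `abar r = ∏_{j<r} δ_j ∏_{j>r} δbar_j`, so that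
`S = ∑ a r` and `Sbar = ∑ abar r`. Then `a r * abar r = ∏_{k≠r} δ_k δbar_k`, which is at least
`4 P Pbar` because the missing factor `δ_r δbar_r` is at most `1/4`. Cauchy–Schwarz applied to
`√(4 P Pbar) ≤ √(a r abar r)`, summed over the `L` indices, then gives `4 L² P Pbar ≤ S Sbar`.
-/

open Finset

theorem card_sq_mul_le_sum_mul_sum {ι : Type*} (s : Finset ι) {f g : ι → ℝ} {c : ℝ}
    (hf : ∀ i ∈ s, 0 ≤ f i) (hg : ∀ i ∈ s, 0 ≤ g i) (h : ∀ i ∈ s, c ≤ f i * g i) :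
    (#s : ℝ) ^ 2 * c ≤ (∑ i ∈ s, f i) * ∑ i ∈ s, g i := by
  rcases le_or_gt c 0 with hc | hc
  · exact (mul_nonpos_of_nonneg_of_nonpos (by positivity) hc).trans
      (mul_nonneg (sum_nonneg hf) (sum_nonneg hg))
  · have hcs := Real.sq_sqrt hc.le
    have := sum_sq_le_sum_mul_sum_of_sq_le_mul s hf hg (r := fun _ ↦ √c)
      fun i hi ↦ by rw [hcs]; exact h i hi
    simpa [mul_pow, hcs] using this

theorem prod_Icc_one_eq_prod_mul_mul_prod {M : Type*} [CommMonoid M] (f : ℕ → M) {r L : ℕ} (hr : r ∈ Icc 1 L) :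
    ∏ j ∈ Icc 1 L, f j = (∏ j ∈ Icc 1 (r - 1), f j) * f r * ∏ j ∈ Icc (r + 1) L, f j := by
  obtain ⟨h1r, hrL⟩ := mem_Icc.1 hr
  have ico : ∀ m n, Icc m n = Ico m (n + 1) := fun m n ↦ by ext; simp only [mem_Icc, mem_Ico]; omega
  rw [ico, ico, ico, Nat.sub_add_cancel h1r, ← prod_Ico_succ_top h1r,
    prod_Ico_consecutive _ (by omega) (by omega)]

theorem prod_lt_mul_prod_gt_nonneg {f g : ℕ → ℝ} {r L : ℕ} (hr : r ∈ Icc 1 L)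
    (hf : ∀ j ∈ Icc 1 L, 0 ≤ f j) (hg : ∀ j ∈ Icc 1 L, 0 ≤ g j) :
    0 ≤ (∏ j ∈ Icc 1 (r - 1), f j) * ∏ j ∈ Icc (r + 1) L, g j := by
  have := mem_Icc.1 hr
  exact mul_nonneg (prod_nonneg fun j hj ↦ hf j (by simp only [mem_Icc] at hj ⊢; omega))
    (prod_nonneg fun j hj ↦ hg j (by simp only [mem_Icc] at hj ⊢; omega))

theorem prod_Icc_one_le_mul_prod_mul_prod {g : ℕ → ℝ} {c : ℝ} {r L : ℕ} (hr : r ∈ Icc 1 L)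
    (hg : ∀ j ∈ Icc 1 L, 0 ≤ g j) (hc : g r ≤ c) :
    ∏ j ∈ Icc 1 L, g j ≤ c * ((∏ j ∈ Icc 1 (r - 1), g j) * ∏ j ∈ Icc (r + 1) L, g j) := by
  rw [prod_Icc_one_eq_prod_mul_mul_prod g hr, mul_right_comm, mul_comm]
  exact mul_le_mul_of_nonneg_right hc (prod_lt_mul_prod_gt_nonneg hr hg hg)

theorem four_mul_prod_mul_prod_le {δ δbar : ℕ → ℝ} {r L : ℕ} (hr : r ∈ Icc 1 L)
    (hδ : ∀ j ∈ Icc 1 L, 0 ≤ δ j) (hδbar : ∀ j ∈ Icc 1 L, 0 ≤ δbar j)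
    (hprod : δ r * δbar r ≤ 1 / 4) :
    4 * ((∏ j ∈ Icc 1 L, δ j) * ∏ j ∈ Icc 1 L, δbar j) ≤
      ((∏ j ∈ Icc 1 (r - 1), δbar j) * ∏ j ∈ Icc (r + 1) L, δ j) *
        ((∏ j ∈ Icc 1 (r - 1), δ j) * ∏ j ∈ Icc (r + 1) L, δbar j) := by
  have := prod_Icc_one_le_mul_prod_mul_prod (g := fun j ↦ δ j * δbar j) hr
    (fun j hj ↦ mul_nonneg (hδ j hj) (hδbar j hj)) hprod
  simp only [prod_mul_distrib] at this
  linear_combination 4 * this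

theorem mul_div_le_one_div_of_sq_mul_le {L z y : ℝ} (hL : 0 ≤ L) (hz : 0 ≤ z)
    (h : 4 * L ^ 2 * z ≤ y) : L * z / y ≤ 1 / (4 * L) := by
  rcases hL.eq_or_lt with rfl | hL
  · simp
  rcases (le_trans (by positivity) h : 0 ≤ y).eq_or_lt with rfl | hy
  · simpa using hL.le
  rw [div_le_div_iff₀ hy (by positivity)]
  nlinarith

theorem stmt_18_general (L : ℕ) (δ δbar : ℕ → ℝ)
    (hδ : ∀ j, 1 ≤ j → j ≤ L → 0 < δ j) (hδbar : ∀ j, 1 ≤ j → j ≤ L → 0 < δbar j)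
    (hprod : ∀ j, 1 ≤ j → j ≤ L → δ j * δbar j ≤ 1/4) :
    4 * (L : ℝ)^2 * (∏ k ∈ Icc 1 L, δ k) * (∏ k ∈ Icc 1 L, δbar k) ≤
      (∑ r ∈ Icc 1 L, (∏ j ∈ Icc 1 (r-1), δbar j) * (∏ j ∈ Icc (r+1) L, δ j)) *
      (∑ r ∈ Icc 1 L, (∏ j ∈ Icc 1 (r-1), δ j) * (∏ j ∈ Icc (r+1) L, δbar j)) ∧
    ((L : ℝ) * (∏ k ∈ Icc 1 L, δ k) /
        (∑ r ∈ Icc 1 L, (∏ j ∈ Icc 1 (r-1), δbar j) * (∏ j ∈ Icc (r+1) L, δ j))) *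
      ((∏ k ∈ Icc 1 L, δbar k) /
        (∑ r ∈ Icc 1 L, (∏ j ∈ Icc 1 (r-1), δ j) * (∏ j ∈ Icc (r+1) L, δbar j)))
      ≤ 1 / (4 * L) := by
  have nonneg : ∀ f : ℕ → ℝ, (∀ j, 1 ≤ j → j ≤ L → 0 < f j) → ∀ j ∈ Icc 1 L, 0 ≤ f j :=
    fun f hf j hj ↦ (hf j (mem_Icc.1 hj).1 (mem_Icc.1 hj).2).le
  have hSS := card_sq_mul_le_sum_mul_sum (Icc 1 L)
    (fun r hr ↦ prod_lt_mul_prod_gt_nonneg hr (nonneg δbar hδbar) (nonneg δ hδ))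
    (fun r hr ↦ prod_lt_mul_prod_gt_nonneg hr (nonneg δ hδ) (nonneg δbar hδbar))
    (fun r hr ↦ four_mul_prod_mul_prod_le hr (nonneg δ hδ) (nonneg δbar hδbar)
      (hprod r (mem_Icc.1 hr).1 (mem_Icc.1 hr).2))
  rw [Nat.card_Icc, Nat.add_sub_cancel] at hSS
  refine ⟨by linarith, ?_⟩
  rw [div_mul_div_comm, mul_assoc]
  exact mul_div_le_one_div_of_sq_mul_le L.cast_nonneg
    (mul_nonneg (prod_nonneg (nonneg δ hδ)) (prod_nonneg (nonneg δbar hδbar))) (by linarith)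

theorem stmt_18 (L : ℕ) (hL : 1 ≤ L) (δ δbar : ℕ → ℝ)
    (hδ : ∀ j, 1 ≤ j → j ≤ L → 0 < δ j) (hδbar : ∀ j, 1 ≤ j → j ≤ L → 0 < δbar j)
    (hprod : ∀ j, 1 ≤ j → j ≤ L → δ j * δbar j ≤ 1/4) :
    4 * (L : ℝ)^2 * (∏ k ∈ Icc 1 L, δ k) * (∏ k ∈ Icc 1 L, δbar k) ≤
      (∑ r ∈ Icc 1 L, (∏ j ∈ Icc 1 (r-1), δbar j) * (∏ j ∈ Icc (r+1) L, δ j)) *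
      (∑ r ∈ Icc 1 L, (∏ j ∈ Icc 1 (r-1), δ j) * (∏ j ∈ Icc (r+1) L, δbar j)) ∧
    ((L : ℝ) * (∏ k ∈ Icc 1 L, δ k) /
        (∑ r ∈ Icc 1 L, (∏ j ∈ Icc 1 (r-1), δbar j) * (∏ j ∈ Icc (r+1) L, δ j))) *
      ((∏ k ∈ Icc 1 L, δbar k) /
        (∑ r ∈ Icc 1 L, (∏ j ∈ Icc 1 (r-1), δ j) * (∏ j ∈ Icc (r+1) L, δbar j)))
      ≤ 1 / (4 * L) :=
  stmt_18_general L δ δbar hδ hδbar hprod
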